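/- Consumption is monotonic: for every assertion a, if (s, h) →[a]_c (s', h') then there exists a heap h'' such that h = h' ⊎ h'' and (s, h'') →[a]_c (s', 0), where 0 is the empty heap. -/
import Mathlib


/- ## Syntax of the programming language and of assertions; semiconcrete states -/

/-- Integer expressions. -/
inductive IExp (V : Type) where
  | lit (z : ℤ)
  | var (x : V)
  | add (e₁ e₂ : IExp V)
  | sub (e₁ e₂ : IExp V)

/-- Boolean expressions. -/
inductive BExp (V : Type) where
  | eq (e₁ e₂ : IExp V)
  | lt (e₁ e₂ : IExp V)
  | not (b : BExp V)

/-- Evaluation of an integer expression under a store. -/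
def IExp.eval {V : Type} (s : V → ℤ) : IExp V → ℤ
  | .lit z => z
  | .var x => s x
  | .add e₁ e₂ => e₁.eval s + e₂.eval s
  | .sub e₁ e₂ => e₁.eval s - e₂.eval s

/-- Evaluation of a boolean expression under a store. -/
def BExp.eval {V : Type} (s : V → ℤ) : BExp V → Bool
  | .eq e₁ e₂ => decide (e₁.eval s = e₂.eval s)
  | .lt e₁ e₂ => decide (e₁.eval s < e₂.eval s)
  | .not b => !(b.eval s)

/-- Predicate names: the built-in points-to and malloc-block predicates, plus
user-defined predicates drawn from `P`. -/
inductive PredName (P : Type) where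
  | pts
  | mb
  | user (q : P)
deriving DecidableEq

/-- A chunk `p(v̄)`: a predicate name together with its integer arguments. -/
abbrev Chunk (P : Type) := PredName P × List ℤ

/-- A heap: a multiset of chunks. -/
abbrev Heap (P : Type) := Multiset (Chunk P)

/-- A (semiconcrete) state: a store paired with a heap. -/
abbrev SCState (V P : Type) := (V → ℤ) × Heap P

/-- Function update `f[x := v]`. -/
def updF {V α : Type} [DecidableEq V] (s : V → α) (x : V) (v : α) : V → α :=
  fun y => if y = x then v else s y

/-- Function update by lists, `f[x̄ := v̄]`. -/
def updsF {V α : Type} [DecidableEq V] : (V → α) → List V → List α → (V → α)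
  | s, [], _ => s
  | s, _ :: _, [] => s
  | s, x :: xs, v :: vs => updsF (updF s x v) xs vs

/-- Assertions: boolean expressions, predicate assertions with variable patterns,
separating conjunction, and conditional assertions. -/
inductive Assn (V P : Type) where
  | bexp (b : BExp V)
  | pred (p : PredName P) (es : List (IExp V)) (xs : List V)
  | star (a₁ a₂ : Assn V P)
  | ite (b : BExp V) (a₁ a₂ : Assn V P)

/- ## Consumption and production arrows -/

/-- The consumption arrow `(s, h) →[a]_c (s', h')`. -/
inductive ConsArrow {V P : Type} [DecidableEq V] :
    SCState V P → Assn V P → SCState V P → Prop where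
  | bexp {s : V → ℤ} {h : Heap P} {b : BExp V} :
      b.eval s = true → ConsArrow (s, h) (.bexp b) (s, h)
  | pred {s : V → ℤ} {h h' : Heap P} {p : PredName P} {es : List (IExp V)}
      {xs : List V} {vs : List ℤ} :
      vs.length = xs.length →
      h = (p, es.map (IExp.eval s) ++ vs) ::ₘ h' →
      ConsArrow (s, h) (.pred p es xs) (updsF s xs vs, h')
  | star {σ σ' σ'' : SCState V P} {a₁ a₂ : Assn V P} :
      ConsArrow σ a₁ σ' → ConsArrow σ' a₂ σ'' → ConsArrow σ (.star a₁ a₂) σ''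
  | iteTrue {s : V → ℤ} {h : Heap P} {b : BExp V} {a₁ a₂ : Assn V P} {σ' : SCState V P} :
      b.eval s = true → ConsArrow (s, h) a₁ σ' → ConsArrow (s, h) (.ite b a₁ a₂) σ'
  | iteFalse {s : V → ℤ} {h : Heap P} {b : BExp V} {a₁ a₂ : Assn V P} {σ' : SCState V P} :
      b.eval s = false → ConsArrow (s, h) a₂ σ' → ConsArrow (s, h) (.ite b a₁ a₂) σ'

/-- The production arrow `(s, h) →[a]_p (s', h')`. -/
inductive ProdArrow {V P : Type} [DecidableEq V] :
    SCState V P → Assn V P → SCState V P → Prop where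
  | bexp {s : V → ℤ} {h : Heap P} {b : BExp V} :
      b.eval s = true → ProdArrow (s, h) (.bexp b) (s, h)
  | pred {s : V → ℤ} {h h' : Heap P} {p : PredName P} {es : List (IExp V)}
      {xs : List V} {vs : List ℤ} :
      vs.length = xs.length →
      h' = (p, es.map (IExp.eval s) ++ vs) ::ₘ h →
      ProdArrow (s, h) (.pred p es xs) (updsF s xs vs, h')
  | star {σ σ' σ'' : SCState V P} {a₁ a₂ : Assn V P} :
      ProdArrow σ a₁ σ' → ProdArrow σ' a₂ σ'' → ProdArrow σ (.star a₁ a₂) σ''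
  | iteTrue {s : V → ℤ} {h : Heap P} {b : BExp V} {a₁ a₂ : Assn V P} {σ' : SCState V P} :
      b.eval s = true → ProdArrow (s, h) a₁ σ' → ProdArrow (s, h) (.ite b a₁ a₂) σ'
  | iteFalse {s : V → ℤ} {h : Heap P} {b : BExp V} {a₁ a₂ : Assn V P} {σ' : SCState V P} :
      b.eval s = false → ProdArrow (s, h) a₂ σ' → ProdArrow (s, h) (.ite b a₁ a₂) σ'

theorem consArrow_frame {V P : Type} [DecidableEq V]
    {a : Assn V P} {σ σ' : SCState V P} (k : Heap P)
    (hc : ConsArrow σ a σ') :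
    ConsArrow (σ.1, σ.2 + k) a (σ'.1, σ'.2 + k) := by
  induction hc with
  | bexp hb => exact .bexp hb
  | pred hl he => exact .pred hl (by simp [he, Multiset.cons_add])
  | star h1 h2 ih1 ih2 => exact .star ih1 ih2
  | iteTrue hb h1 ih => exact .iteTrue hb ih
  | iteFalse hb h1 ih => exact .iteFalse hb ih

theorem consArrow_mono' {V P : Type} [DecidableEq V]
    {a : Assn V P} {σ σ' : SCState V P}
    (hc : ConsArrow σ a σ') :
    ∃ h'' : Heap P, σ.2 = σ'.2 + h'' ∧ ConsArrow (σ.1, h'') a (σ'.1, 0) := by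
  induction hc with
  | @bexp s h b hb => exact ⟨0, by simp, .bexp hb⟩
  | @pred s h h' p es xs vs hl he =>
      exact ⟨{(p, es.map (IExp.eval s) ++ vs)}, by rw [he]; exact (Multiset.singleton_add _ _).symm.trans (add_comm _ _),
        .pred hl (by simp)⟩
  | @star σ1 σ2 σ3 a₁ a₂ h1 h2 ih1 ih2 =>
      obtain ⟨k1, e1, c1⟩ := ih1
      obtain ⟨k2, e2, c2⟩ := ih2
      refine ⟨k2 + k1, by rw [e1, e2]; ac_rfl, .star (σ' := (σ2.1, k2)) ?_ ?_⟩
      · have := consArrow_frame k2 c1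
        simpa [add_comm] using this
      · simpa using c2
  | iteTrue hb h1 ih =>
      obtain ⟨k, e, c⟩ := ih
      exact ⟨k, e, .iteTrue hb c⟩
  | iteFalse hb h1 ih =>
      obtain ⟨k, e, c⟩ := ih
      exact ⟨k, e, .iteFalse hb c⟩

/-- consumption is monotonic. -/
theorem consArrow_mono {V P : Type} [DecidableEq V]
    (a : Assn V P) (s s' : V → ℤ) (h h' : Heap P)
    (hc : ConsArrow (s, h) a (s', h')) :
    ∃ h'' : Heap P, h = h' + h'' ∧ ConsArrow (s, h'') a (s', 0) := by
  exact consArrow_mono' hc
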